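/- Let G be a connected finite graph. If every optimal vector coloring of G is locally injective, then G is a core. -/

import Mathlib

open SimpleGraph

/-- A vector `t`-coloring of `G`: an assignment of unit vectors to the vertices such
that adjacent vertices receive vectors with inner product at most `-1/(t-1)`. -/
def IsVectorColoring {V : Type*} (G : SimpleGraph V) {d : ℕ} (t : ℝ)
    (p : V → EuclideanSpace ℝ (Fin d)) : Prop :=
  (∀ v, ‖p v‖ = 1) ∧ ∀ u v : V, G.Adj u v → (inner ℝ (p u) (p v) : ℝ) ≤ -1 / (t - 1)

/-- The vector chromatic number of `G`. -/
noncomputable def vecChrom {V : Type*} (G : SimpleGraph V) : ℝ :=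
  sInf {t : ℝ | 2 ≤ t ∧ ∃ (d : ℕ) (p : V → EuclideanSpace ℝ (Fin d)), IsVectorColoring G t p}


/-- `G` is a core: every endomorphism of `G` is an automorphism. -/
def IsCore {V : Type*} (G : SimpleGraph V) : Prop :=
  ∀ φ : G →g G, ∃ ψ : G ≃g G, ∀ v, ψ v = φ v

/-!
If `φ` is an endomorphism of `G` and `p` is an optimal vector coloring, then `p ∘ φ` is again an
optimal vector coloring, hence locally injective, and therefore so is `φ`. Optimal vector
colorings exist: any vector coloring can be moved isometrically into dimension `|V|`, and there
the colorings for the feasible values of `t` form a nested family of nonempty compact sets.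

A locally injective endomorphism of a finite connected graph is an automorphism: some power
`e = φ ^ n` is idempotent and still locally injective. If `s` is a fixed point of `e` and `v` a
neighbour of `s`, then `v` and `e v` are both neighbours of `s` with the same image under `e`,
so `v` is fixed. By connectivity `e = 1`, and `φ` is invertible with inverse `φ ^ (n - 1)`.
-/

open Module RealInnerProductSpace

theorem exists_linearIsometry_of_finrank_le {E F : Type*} [NormedAddCommGroup E]
    [InnerProductSpace ℝ E] [FiniteDimensional ℝ E] [NormedAddCommGroup F]
    [InnerProductSpace ℝ F] [FiniteDimensional ℝ F] (h : finrank ℝ E ≤ finrank ℝ F) :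
    Nonempty (E →ₗᵢ[ℝ] F) := by
  let bE := stdOrthonormalBasis ℝ E
  let v : Fin (finrank ℝ E) → F := stdOrthonormalBasis ℝ F ∘ Fin.castLE h
  have hv : Orthonormal ℝ v :=
    (stdOrthonormalBasis ℝ F).orthonormal.comp _ (Fin.castLE_injective h)
  refine ⟨(bE.toBasis.constr ℝ v).isometryOfOrthonormal (v := bE.toBasis) (by simp) ?_⟩
  convert hv
  ext i : 1
  simp

theorem exists_fin_card_inner_eq {ι E : Type*} [Fintype ι] [NormedAddCommGroup E]
    [InnerProductSpace ℝ E] (p : ι → E) :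
    ∃ q : ι → EuclideanSpace ℝ (Fin (Fintype.card ι)),
      (∀ i, ‖q i‖ = ‖p i‖) ∧ ∀ i j, ⟪q i, q j⟫ = ⟪p i, p j⟫ := by
  let W := Submodule.span ℝ (Set.range p)
  have : FiniteDimensional ℝ W := FiniteDimensional.span_of_finite ℝ (Set.finite_range p)
  have hW : finrank ℝ W ≤ finrank ℝ (EuclideanSpace ℝ (Fin (Fintype.card ι))) := by
    simpa [Set.finrank] using finrank_range_le_card (R := ℝ) p
  obtain ⟨L⟩ := exists_linearIsometry_of_finrank_le hW
  have hp : ∀ i, p i ∈ W := fun i => Submodule.subset_span (Set.mem_range_self i)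
  exact ⟨fun i => L ⟨p i, hp i⟩, fun i => L.norm_map _, fun i j => L.inner_map_map _ _⟩

noncomputable def regularSimplex (V : Type*) [Fintype V] [DecidableEq V] (v : V) :
    EuclideanSpace ℝ V :=
  EuclideanSpace.single v 1 - (Fintype.card V : ℝ)⁻¹ • ∑ w, EuclideanSpace.single w 1

theorem inner_regularSimplex {V : Type*} [Fintype V] [DecidableEq V] [Nonempty V] (u v : V) :
    ⟪regularSimplex V u, regularSimplex V v⟫ =
      (if u = v then 1 else 0) - (Fintype.card V : ℝ)⁻¹ := by
  simp [regularSimplex, inner_sub_left, inner_sub_right, inner_smul_left, inner_smul_right,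
    sum_inner, inner_sum, EuclideanSpace.inner_single_left, Finset.sum_ite_eq, eq_comm]

theorem exists_isVectorColoring_of_inner {V E : Type*} [Fintype V] [NormedAddCommGroup E]
    [InnerProductSpace ℝ E] (G : SimpleGraph V) (t : ℝ) (p : V → E) (hnorm : ∀ v, ‖p v‖ = 1)
    (hadj : ∀ u v, G.Adj u v → ⟪p u, p v⟫ ≤ -1 / (t - 1)) :
    ∃ q : V → EuclideanSpace ℝ (Fin (Fintype.card V)), IsVectorColoring G t q := by
  obtain ⟨q, hqn, hqi⟩ := exists_fin_card_inner_eq p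
  exact ⟨q, fun v => (hqn v).trans (hnorm v), fun u v huv => (hqi u v).trans_le (hadj u v huv)⟩

theorem exists_isVectorColoring_top (V : Type*) [Fintype V] [Nontrivial V] :
    ∃ p : V → EuclideanSpace ℝ (Fin (Fintype.card V)),
      IsVectorColoring (⊤ : SimpleGraph V) (Fintype.card V) p := by
  classical
  set n : ℝ := (Fintype.card V : ℝ)
  have hn : 1 < n := Nat.one_lt_cast.2 Fintype.one_lt_card
  have hn1 : n - 1 ≠ 0 := by linarith
  have hc : √(n / (n - 1)) * √(n / (n - 1)) = n / (n - 1) :=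
    Real.mul_self_sqrt (div_nonneg (by positivity) (by linarith))
  have hinner : ∀ u v,
      ⟪√(n / (n - 1)) • regularSimplex V u, √(n / (n - 1)) • regularSimplex V v⟫ =
        n / (n - 1) * ((if u = v then 1 else 0) - n⁻¹) := by
    intro u v
    rw [real_inner_smul_left, real_inner_smul_right, inner_regularSimplex, ← mul_assoc, hc]
  refine exists_isVectorColoring_of_inner _ _ (fun v => √(n / (n - 1)) • regularSimplex V v)
    (fun v => ?_) (fun u v huv => ?_)
  · rw [norm_eq_sqrt_real_inner, hinner, if_pos rfl]
    field_simp
    simp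
  · rw [hinner, if_neg huv]
    apply le_of_eq
    field_simp
    ring

section VectorColoring

variable {V W : Type*} {G : SimpleGraph V} {H : SimpleGraph W} {d : ℕ} {t t' : ℝ}

theorem IsVectorColoring.comp {p : W → EuclideanSpace ℝ (Fin d)} (hp : IsVectorColoring H t p)
    (f : G →g H) : IsVectorColoring G t (p ∘ f) :=
  ⟨fun _ => hp.1 _, fun _ _ huv => hp.2 _ _ (f.map_adj huv)⟩

theorem IsVectorColoring.mono {p : V → EuclideanSpace ℝ (Fin d)} (hp : IsVectorColoring G t p)
    (ht : 1 < t) (htt' : t ≤ t') : IsVectorColoring G t' p := by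
  refine ⟨hp.1, fun u v huv => (hp.2 u v huv).trans ?_⟩
  rw [neg_div, neg_div, neg_le_neg_iff]
  exact one_div_le_one_div_of_le (by linarith) (by linarith)

variable (G d)

theorem isClosed_setOf_isVectorColoring (t : ℝ) :
    IsClosed {p : V → EuclideanSpace ℝ (Fin d) | IsVectorColoring G t p} := by
  simp only [IsVectorColoring, Set.ofPred_and, Set.ofPred_forall]
  exact (isClosed_iInter fun v => isClosed_eq (continuous_apply v).norm continuous_const).inter
    (isClosed_iInter fun u => isClosed_iInter fun v => isClosed_iInter fun _ =>
      isClosed_le ((continuous_apply u).inner (continuous_apply v)) continuous_const)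

theorem isCompact_setOf_isVectorColoring [Finite V] (t : ℝ) :
    IsCompact {p : V → EuclideanSpace ℝ (Fin d) | IsVectorColoring G t p} :=
  (isCompact_univ_pi fun _ => isCompact_sphere 0 1).of_isClosed_subset
    (isClosed_setOf_isVectorColoring G d t) fun _ hp v _ => by simpa using hp.1 v

end VectorColoring

theorem le_neg_one_div_sInf_sub_one {A : Set ℝ} (hA : A.Nonempty) {c : ℝ} (hc : 1 < c)
    (hcA : ∀ t ∈ A, c ≤ t) {x : ℝ} (hx : ∀ t ∈ A, x ≤ -1 / (t - 1)) :
    x ≤ -1 / (sInf A - 1) := by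
  have hT : IsClosed (Set.Ici c ∩ (fun t : ℝ => -1 / (t - 1)) ⁻¹' Set.Ici x) :=
    ContinuousOn.preimage_isClosed_of_isClosed
      (continuousOn_const.div (continuousOn_id.sub continuousOn_const)
        fun t ht => by simp only [Set.mem_Ici] at ht; linarith)
      isClosed_Ici isClosed_Ici
  have hAT : A ⊆ Set.Ici c ∩ (fun t : ℝ => -1 / (t - 1)) ⁻¹' Set.Ici x :=
    fun t ht => ⟨hcA t ht, hx t ht⟩
  exact (closure_minimal hAT hT (csInf_mem_closure hA ⟨c, hcA⟩)).2

theorem exists_isVectorColoring_vecChrom {V : Type*} [Fintype V] [Nontrivial V]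
    (G : SimpleGraph V) :
    ∃ p : V → EuclideanSpace ℝ (Fin (Fintype.card V)), IsVectorColoring G (vecChrom G) p := by
  set A := {t : ℝ | 2 ≤ t ∧ ∃ (d : ℕ) (p : V → EuclideanSpace ℝ (Fin d)), IsVectorColoring G t p}
  let Z : A → Set (V → EuclideanSpace ℝ (Fin (Fintype.card V))) :=
    fun t => {p | IsVectorColoring G t p}
  have hA : A.Nonempty := by
    obtain ⟨p, hp⟩ := exists_isVectorColoring_top V
    exact ⟨_, Nat.ofNat_le_cast.2 Fintype.one_lt_card, _, _, hp.comp (Hom.ofLE le_top)⟩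
  have : Nonempty A := hA.to_subtype
  have hZ : Monotone Z := fun s t hst p hp => hp.mono (by linarith [s.2.1]) hst
  obtain ⟨p, hp⟩ := IsCompact.nonempty_iInter_of_directed_nonempty_isCompact_isClosed Z
    hZ.directed_ge
    (fun t => by
      obtain ⟨-, d, p, hp⟩ := t.2
      exact exists_isVectorColoring_of_inner G t p hp.1 hp.2)
    (fun t => isCompact_setOf_isVectorColoring G _ t)
    (fun t => isClosed_setOf_isVectorColoring G _ t)
  rw [Set.mem_iInter] at hp
  exact ⟨p, (hp ⟨_, hA.some_mem⟩).1, fun u v huv =>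
    le_neg_one_div_sInf_sub_one hA one_lt_two (fun t ht => ht.1)
      fun t ht => (hp ⟨t, ht⟩).2 u v huv⟩

theorem exists_ne_zero_isIdempotentElem_pow {M : Type*} [Monoid M] [Finite M] (a : M) :
    ∃ n ≠ 0, IsIdempotentElem (a ^ n) := by
  obtain ⟨i, j, hij, hpow⟩ := Finite.exists_ne_map_eq_of_infinite (a ^ · : ℕ → M)
  wlog hlt : i < j generalizing i j
  · exact this j i hij.symm hpow.symm (by omega)
  have hcycle : ∀ k, a ^ i * a ^ ((j - i) * k) = a ^ i := by
    intro k
    induction k with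
    | zero => simp
    | succ k ih =>
      rw [mul_add, mul_one, pow_add, ← mul_assoc, ih, ← pow_add, Nat.add_sub_cancel' hlt.le]
      exact hpow.symm
  have hq : 0 < j - i := Nat.sub_pos_of_lt hlt
  have hle : i ≤ (j - i) * (i + 1) := by nlinarith
  refine ⟨(j - i) * (i + 1), by positivity, ?_⟩
  calc a ^ ((j - i) * (i + 1)) * a ^ ((j - i) * (i + 1))
      = a ^ ((j - i) * (i + 1) - i) * (a ^ i * a ^ ((j - i) * (i + 1))) := by
        rw [← mul_assoc, ← pow_add a _ i, Nat.sub_add_cancel hle]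
    _ = a ^ ((j - i) * (i + 1)) := by rw [hcycle, ← pow_add, Nat.sub_add_cancel hle]

namespace SimpleGraph

variable {V W X : Type*} {G : SimpleGraph V} {H : SimpleGraph W} {K : SimpleGraph X}

theorem Connected.forall_of_adj {P : V → Prop} (hc : G.Connected) {v₀ : V} (h₀ : P v₀)
    (hadj : ∀ u v, G.Adj u v → P u → P v) (v : V) : P v := by
  have := (reachable_iff_reflTransGen v₀ v).1 (hc.preconnected v₀ v)
  induction this with
  | refl => exact h₀
  | tail _ huv ih => exact hadj _ _ huv ih

def Hom.IsLocallyInjective (f : G →g H) : Prop :=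
  ∀ ⦃u v w : V⦄, G.Adj u w → G.Adj v w → f u = f v → u = v

namespace Hom.IsLocallyInjective

theorem comp {f : G →g H} {g : H →g K} (hg : g.IsLocallyInjective) (hf : f.IsLocallyInjective) :
    (g.comp f).IsLocallyInjective :=
  fun _ _ _ huw hvw h => hf huw hvw (hg (f.map_adj huw) (f.map_adj hvw) h)

theorem pow {f : G →g G} (hf : f.IsLocallyInjective) (n : ℕ) : (f ^ n).IsLocallyInjective := by
  induction n with
  | zero => exact fun _ _ _ _ _ h => h
  | succ n ih => rw [pow_succ]; exact ih.comp hf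

theorem eq_one_of_isIdempotentElem {e : G →g G} (he : e.IsLocallyInjective)
    (hidem : IsIdempotentElem e) (hc : G.Connected) : e = 1 := by
  have hfix : ∀ v, e (e v) = e v := fun v => DFunLike.congr_fun hidem v
  refine DFunLike.ext _ _ (hc.forall_of_adj (P := fun v => e v = v) (hfix hc.nonempty.some) ?_)
  intro s v hsv hs
  exact (he hsv.symm (hs ▸ e.map_adj hsv.symm) (hfix v).symm).symm

theorem exists_iso [Finite V] {f : G →g G} (hf : f.IsLocallyInjective) (hc : G.Connected) :
    ∃ ψ : G ≃g G, ∀ v, ψ v = f v := by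
  obtain ⟨n, hn, hidem⟩ := exists_ne_zero_isIdempotentElem_pow (M := G →g G) f
  have hpow : f ^ n = 1 := (hf.pow n).eq_one_of_isIdempotentElem hidem hc
  have hleft : f ^ (n - 1) * f = 1 := by rw [← pow_succ, Nat.sub_add_cancel (by omega), hpow]
  have hright : f * f ^ (n - 1) = 1 := by rw [← pow_succ', Nat.sub_add_cancel (by omega), hpow]
  refine ⟨⟨⟨f, ⇑(f ^ (n - 1)), DFunLike.congr_fun hleft, DFunLike.congr_fun hright⟩, ?_⟩,
    fun _ => rfl⟩
  intro u v
  change G.Adj (f u) (f v) ↔ G.Adj u v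
  refine ⟨fun h => ?_, f.map_adj⟩
  have h' := (f ^ (n - 1)).map_adj h
  rwa [← RelHom.mul_apply, ← RelHom.mul_apply, hleft] at h'

end Hom.IsLocallyInjective
end SimpleGraph

/-- If every optimal vector coloring of a connected finite graph `G` is locally injective,
then `G` is a core. -/
theorem stmt5 {V : Type} [Fintype V] (G : SimpleGraph V) (hc : G.Connected)
    (h : ∀ (d : ℕ) (p : V → EuclideanSpace ℝ (Fin d)),
      IsVectorColoring G (vecChrom G) p →
      ∀ u v w : V, u ≠ v → G.Adj u w → G.Adj v w → p u ≠ p v) :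
    IsCore G := by
  intro φ
  refine Hom.IsLocallyInjective.exists_iso (fun u v w huw hvw hφ => ?_) hc
  by_contra huv
  have : Nontrivial V := ⟨⟨u, w, G.ne_of_adj huw⟩⟩
  obtain ⟨p, hp⟩ := exists_isVectorColoring_vecChrom G
  exact h _ _ (hp.comp φ) u v w huv huw hvw (congrArg p hφ)
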